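/- Let G = (V,E) be a finite simple graph and v ∈ V. The Levitt curvature satisfies K(v) = 1 + Σ_{k ≥ 0} (-1)^{k+1} v_k(S(v))/(k+2), where S(v) is the subgraph of G induced on the set of neighbors of v and v_k(S(v)) is the number of k-dimensional simplices in the Whitney complex of S(v), i.e. the number of cliques of S(v) with exactly k+1 vertices. -/

import Mathlib

/-! The cliques containing `v` are exactly the cones `insert v y` over the cliques `y` of the
unit sphere `S(v)`, the empty clique included (its cone is the vertex `{v}`, contributing the
`1`). A cone has one vertex more than its base, so the clique of `S(v)` with `k + 1` vertices
contributes `(-1)^(k+1)/(k+2)`; grouping the sphere cliques by size gives the formula. -/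

open Finset

open scoped Classical in
/-- The Whitney complex of a finite simple graph `G`: the finite set of
nonempty cliques (vertex sets of complete subgraphs) of `G`. -/
noncomputable def whitneySimplices {V : Type*} [Fintype V]
    (G : SimpleGraph V) : Finset (Finset V) :=
  Finset.univ.powerset.filter fun x => x.Nonempty ∧ ∀ a ∈ x, ∀ b ∈ x, a ≠ b → G.Adj a b

open scoped Classical in
/-- The Levitt curvature of `G` at the vertex `v`:
`K(v) = ∑_{x ∋ v} (-1)^(|x|-1)/|x|`, the sum over the cliques of `G`
containing `v` (the curvature coming from uniform distributions). -/
noncomputable def levittCurvature {V : Type*} [Fintype V]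
    (G : SimpleGraph V) (v : V) : ℝ :=
  ∑ x ∈ (whitneySimplices G).filter (fun x => v ∈ x),
    (-1 : ℝ) ^ (x.card - 1) / (x.card : ℝ)

open scoped Classical in
/-- `v_k(S(v))`: the number of `k`-dimensional simplices of the Whitney complex
of the unit sphere `S(v)` (the subgraph induced on the neighbors of `v`), i.e.
the number of cliques of `G` with `k+1` vertices all adjacent to `v`. -/
noncomputable def sphereFaceCount {V : Type*} [Fintype V]
    (G : SimpleGraph V) (v : V) (k : ℕ) : ℕ :=
  ((whitneySimplices G).filter
    (fun x => (∀ w ∈ x, G.Adj v w) ∧ x.card = k + 1)).card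

open scoped Classical in
noncomputable def sphereSimplices {V : Type*} [Fintype V] (G : SimpleGraph V) (v : V) :
    Finset (Finset V) :=
  (whitneySimplices G).filter fun y => ∀ w ∈ y, G.Adj v w

theorem Finset.sum_card_eq_sum_range_card_filter_card_eq {α M : Type*} [Fintype α]
    [AddCommMonoid M] {s : Finset (Finset α)} (hs : ∀ y ∈ s, y.Nonempty) (φ : ℕ → M) :
    ∑ y ∈ s, φ #y = ∑ k ∈ range (Fintype.card α), #(s.filter (#· = k + 1)) • φ (k + 1) := by
  have hcard : ∀ y ∈ s, #y - 1 + 1 = #y := fun y hy => Nat.sub_add_cancel (hs y hy).card_pos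
  have hmaps : ∀ y ∈ s, #y - 1 ∈ range (Fintype.card α) := fun y hy => by
    have := y.card_le_univ
    have := hcard y hy
    rw [mem_range]
    omega
  rw [← sum_congr rfl fun y hy => congrArg φ (hcard y hy),
    ← sum_fiberwise_of_maps_to' hmaps fun k => φ (k + 1)]
  refine sum_congr rfl fun k _ => ?_
  rw [sum_const]
  congr 2
  refine filter_congr fun y hy => ?_
  have := hcard y hy
  omega

section

variable {V : Type*} [Fintype V] (G : SimpleGraph V) (v : V)

theorem mem_whitneySimplices {x : Finset V} :
    x ∈ whitneySimplices G ↔ x.Nonempty ∧ G.IsClique (x : Set V) := by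
  simp [whitneySimplices, SimpleGraph.IsClique, Set.Pairwise]

theorem mem_sphereSimplices {y : Finset V} :
    y ∈ sphereSimplices G v ↔ y.Nonempty ∧ G.IsClique (y : Set V) ∧ ∀ w ∈ y, G.Adj v w := by
  simp [sphereSimplices, mem_whitneySimplices, and_assoc]

theorem nonempty_of_mem_sphereSimplices {y : Finset V} (hy : y ∈ sphereSimplices G v) :
    y.Nonempty :=
  ((mem_sphereSimplices G v).mp hy).1

theorem sphereFaceCount_eq_card_filter (k : ℕ) :
    sphereFaceCount G v k = #((sphereSimplices G v).filter (#· = k + 1)) := by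
  rw [sphereFaceCount, sphereSimplices, filter_filter]

theorem notMem_of_mem_insert_empty_sphereSimplices [DecidableEq V] {y : Finset V}
    (hy : y ∈ insert ∅ (sphereSimplices G v)) : v ∉ y := by
  rcases mem_insert.mp hy with rfl | hy
  · exact notMem_empty v
  · exact fun hv => G.loopless.irrefl v (((mem_sphereSimplices G v).mp hy).2.2 v hv)

theorem insert_mem_whitneySimplices_iff [DecidableEq V] {y : Finset V} (hv : v ∉ y) :
    insert v y ∈ whitneySimplices G ↔ y ∈ insert ∅ (sphereSimplices G v) := by
  rw [mem_whitneySimplices, coe_insert, G.isClique_insert_of_notMem (mem_coe.not.mpr hv),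
    mem_insert, mem_sphereSimplices, ← not_nonempty_iff_eq_empty]
  simp only [insert_nonempty, true_and]
  tauto

theorem sum_filter_mem_whitneySimplices [DecidableEq V] {M : Type*} [AddCommMonoid M]
    (f : ℕ → M) :
    ∑ x ∈ (whitneySimplices G).filter (v ∈ ·), f #x
      = f 1 + ∑ y ∈ sphereSimplices G v, f (#y + 1) := by
  have hempty : ∅ ∉ sphereSimplices G v := fun h =>
    not_nonempty_empty (nonempty_of_mem_sphereSimplices G v h)
  rw [show f 1 + ∑ y ∈ sphereSimplices G v, f (#y + 1)
      = ∑ y ∈ insert ∅ (sphereSimplices G v), f (#y + 1) by rw [sum_insert hempty, card_empty]]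
  refine sum_nbij' (·.erase v) (insert v) (fun x hx => ?_) (fun y hy => ?_)
    (fun x hx => insert_erase (mem_filter.mp hx).2)
    (fun y hy => erase_insert (notMem_of_mem_insert_empty_sphereSimplices G v hy))
    (fun x hx => by rw [card_erase_add_one (mem_filter.mp hx).2])
  · obtain ⟨hxW, hvx⟩ := mem_filter.mp hx
    rw [← insert_erase hvx] at hxW
    exact (insert_mem_whitneySimplices_iff G v (notMem_erase v x)).mp hxW
  · exact mem_filter.mpr ⟨(insert_mem_whitneySimplices_iff G v
      (notMem_of_mem_insert_empty_sphereSimplices G v hy)).mpr hy, mem_insert_self v y⟩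

end

theorem levittCurvature_eq_sphere_sum_general
    {V : Type*} [Fintype V]
    (G : SimpleGraph V) (v : V) :
    levittCurvature G v
      = 1 + ∑ k ∈ Finset.range (Fintype.card V),
          (-1 : ℝ) ^ (k + 1) * (sphereFaceCount G v k : ℝ) / ((k : ℝ) + 2) := by
  classical
  rw [levittCurvature, sum_filter_mem_whitneySimplices G v fun n : ℕ => (-1 : ℝ) ^ (n - 1) / n,
    sum_card_eq_sum_range_card_filter_card_eq (fun _ => nonempty_of_mem_sphereSimplices G v)
      fun n : ℕ => (-1 : ℝ) ^ (n + 1 - 1) / ((n + 1 : ℕ) : ℝ),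
    Nat.sub_self, pow_zero, Nat.cast_one, div_one]
  congr 1
  refine sum_congr rfl fun k _ => ?_
  rw [sphereFaceCount_eq_card_filter, nsmul_eq_mul, Nat.add_sub_cancel]
  push_cast
  ring

/-- **Levitt curvature via the unit sphere:**
`K(v) = 1 + ∑_{k ≥ 0} (-1)^(k+1) v_k(S(v))/(k+2)`, where `v_k(S(v))` is the
number of `k`-dimensional simplices of the unit sphere `S(v)` of `v`. -/
theorem levittCurvature_eq_sphere_sum
    {V : Type*} [Fintype V] [DecidableEq V]
    (G : SimpleGraph V) (v : V) :
    levittCurvature G v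
      = 1 + ∑ k ∈ Finset.range (Fintype.card V),
          (-1 : ℝ) ^ (k + 1) * (sphereFaceCount G v k : ℝ) / ((k : ℝ) + 2) :=
  levittCurvature_eq_sphere_sum_general G v
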